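/- Let K₁ ∈ B(H₁), K₂ ∈ B(H₂), let F₁ : Ω → H₁ and F₂ : Ω → H₂ be Bessel mappings with transform operators θ₁, θ₂ and pre-frame operators T₁ = θ₁*, T₂ = θ₂*, and suppose F₁ ⊕ F₂ is a continuous (K₁ ⊕ K₂)-frame for H₁ ⊕ H₂ (with some positive bounds). Then: (1) if T₁ is injective, then K₂ = 0; (2) if T₂ is injective, then K₁ = 0; (3) if both T₁ and T₂ are injective, then K₁ = 0 and K₂ = 0. -/

import Mathlib

open MeasureTheory ContinuousLinearMap

/-- The direct sum operator `K₁ ⊕ K₂` on the super Hilbert space `H₁ ⊕ H₂`, mapping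
`(u, v)` to `(K₁ u, K₂ v)`. -/
noncomputable def prodOp {𝕜 : Type*} [RCLike 𝕜]
    {H₁ : Type*} [NormedAddCommGroup H₁] [InnerProductSpace 𝕜 H₁]
    {H₂ : Type*} [NormedAddCommGroup H₂] [InnerProductSpace 𝕜 H₂]
    (K₁ : H₁ →L[𝕜] H₁) (K₂ : H₂ →L[𝕜] H₂) :
    WithLp 2 (H₁ × H₂) →L[𝕜] WithLp 2 (H₁ × H₂) :=
  ((WithLp.prodContinuousLinearEquiv 2 𝕜 H₁ H₂).symm.toContinuousLinearMap).comp
    ((K₁.prodMap K₂).comp (WithLp.prodContinuousLinearEquiv 2 𝕜 H₁ H₂).toContinuousLinearMap)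


/-! Testing the lower frame inequality of `F₁ ⊕ F₂` at `(u, v)` gives
`A (‖K₁* u‖² + ‖K₂* v‖²) ≤ ‖θ₁ u + θ₂ v‖²`. If `T₁ = θ₁*` is injective then `θ₁` has dense
range, so `θ₁ u` can be taken arbitrarily close to `-θ₂ v`; hence `K₂* v = 0` for all `v`,
that is `K₂ = 0`. The case of `T₂` is symmetric. -/

open scoped InnerProductSpace

section

variable {𝕜 : Type*} [RCLike 𝕜]

theorem ContinuousLinearMap.denseRange_of_injective_adjoint
    {E F : Type*} [NormedAddCommGroup E] [InnerProductSpace 𝕜 E] [CompleteSpace E]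
    [NormedAddCommGroup F] [InnerProductSpace 𝕜 F] [CompleteSpace F]
    (T : E →L[𝕜] F) (h : Function.Injective (adjoint T)) : DenseRange T := by
  have : T.range.topologicalClosure = ⊤ := by
    rw [Submodule.topologicalClosure_eq_top_iff, orthogonal_range]
    exact LinearMap.ker_eq_bot.mpr h
  rw [← Submodule.dense_iff_topologicalClosure_eq_top] at this
  simpa [DenseRange, LinearMap.coe_range] using this

theorem DenseRange.nonpos_of_le_norm_add_sq {α F : Type*} [SeminormedAddCommGroup F]
    {f : α → F} (hf : DenseRange f) (y : F) {c : ℝ} (h : ∀ a, c ≤ ‖f a + y‖ ^ 2) : c ≤ 0 := by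
  simpa using hf.induction_on (p := fun w => c ≤ ‖w + y‖ ^ 2) (-y)
    (isClosed_le continuous_const (by fun_prop)) h

theorem MeasureTheory.L2.integral_norm_sq {Ω : Type*} [MeasurableSpace Ω] {μ : Measure Ω}
    (f : Lp 𝕜 2 μ) : ∫ ω, ‖f ω‖ ^ 2 ∂μ = ‖f‖ ^ 2 := by
  rw [← inner_self_eq_norm_sq (𝕜 := 𝕜), L2.inner_def, ← integral_re (L2.integrable_inner f f)]
  simp_rw [inner_self_eq_norm_sq]

theorem DenseRange.eq_zero_of_mul_norm_sq_le
    {α E F G : Type*} [SeminormedAddCommGroup F] [NormedAddCommGroup E] [NormedSpace 𝕜 E]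
    [NormedAddCommGroup G] [NormedSpace 𝕜 G]
    {θ₁ : α → F} (hθ₁ : DenseRange θ₁) (θ₂ : E → F) (S : E →L[𝕜] G) {A : ℝ} (hA : 0 < A)
    (h : ∀ u v, A * ‖S v‖ ^ 2 ≤ ‖θ₁ u + θ₂ v‖ ^ 2) : S = 0 := by
  ext v
  have : A * ‖S v‖ ^ 2 ≤ 0 := hθ₁.nonpos_of_le_norm_add_sq (θ₂ v) (h · v)
  have : ‖S v‖ ^ 2 ≤ 0 := nonpos_of_mul_nonpos_right this hA
  simpa using this

variable {H₁ H₂ : Type*} [NormedAddCommGroup H₁] [InnerProductSpace 𝕜 H₁]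
  [NormedAddCommGroup H₂] [InnerProductSpace 𝕜 H₂]

theorem prodOp_toLp (K₁ : H₁ →L[𝕜] H₁) (K₂ : H₂ →L[𝕜] H₂) (u : H₁) (v : H₂) :
    prodOp K₁ K₂ (WithLp.toLp 2 (u, v)) = WithLp.toLp 2 (K₁ u, K₂ v) :=
  rfl

theorem adjoint_prodOp [CompleteSpace H₁] [CompleteSpace H₂]
    (K₁ : H₁ →L[𝕜] H₁) (K₂ : H₂ →L[𝕜] H₂) :
    adjoint (prodOp K₁ K₂) = prodOp (adjoint K₁) (adjoint K₂) := by
  refine ((eq_adjoint_iff _ _).mpr fun x y => ?_).symm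
  simp [prodOp, WithLp.prod_inner_apply, adjoint_inner_left]

theorem WithLp.norm_toLp_prod_sq (u : H₁) (v : H₂) :
    ‖WithLp.toLp 2 (u, v)‖ ^ 2 = ‖u‖ ^ 2 + ‖v‖ ^ 2 :=
  WithLp.prod_norm_sq_eq_of_L2 _

variable {Ω : Type*} [MeasurableSpace Ω] {μ : Measure Ω}

theorem integral_norm_inner_toLp_sq {F₁ : Ω → H₁} {F₂ : Ω → H₂}
    {θ₁ : H₁ →L[𝕜] Lp 𝕜 2 μ} (hθ₁ : ∀ u, (θ₁ u : Ω → 𝕜) =ᵐ[μ] fun ω => ⟪F₁ ω, u⟫_𝕜)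
    {θ₂ : H₂ →L[𝕜] Lp 𝕜 2 μ} (hθ₂ : ∀ v, (θ₂ v : Ω → 𝕜) =ᵐ[μ] fun ω => ⟪F₂ ω, v⟫_𝕜)
    (u : H₁) (v : H₂) :
    ∫ ω, ‖⟪WithLp.toLp 2 (F₁ ω, F₂ ω), WithLp.toLp 2 (u, v)⟫_𝕜‖ ^ 2 ∂μ = ‖θ₁ u + θ₂ v‖ ^ 2 := by
  rw [← L2.integral_norm_sq]
  refine integral_congr_ae ?_
  filter_upwards [hθ₁ u, hθ₂ v, Lp.coeFn_add (θ₁ u) (θ₂ v)] with ω h₁ h₂ h_add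
  rw [h_add, Pi.add_apply, h₁, h₂, WithLp.prod_inner_apply]

theorem lower_bound_prodOp_toLp [CompleteSpace H₁] [CompleteSpace H₂]
    {K₁ : H₁ →L[𝕜] H₁} {K₂ : H₂ →L[𝕜] H₂} {F₁ : Ω → H₁} {F₂ : Ω → H₂}
    {θ₁ : H₁ →L[𝕜] Lp 𝕜 2 μ} (hθ₁ : ∀ u, (θ₁ u : Ω → 𝕜) =ᵐ[μ] fun ω => ⟪F₁ ω, u⟫_𝕜)
    {θ₂ : H₂ →L[𝕜] Lp 𝕜 2 μ} (hθ₂ : ∀ v, (θ₂ v : Ω → 𝕜) =ᵐ[μ] fun ω => ⟪F₂ ω, v⟫_𝕜)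
    {A : ℝ} (hlower : ∀ x : WithLp 2 (H₁ × H₂),
      A * ‖adjoint (prodOp K₁ K₂) x‖ ^ 2 ≤ ∫ ω, ‖⟪WithLp.toLp 2 (F₁ ω, F₂ ω), x⟫_𝕜‖ ^ 2 ∂μ)
    (u : H₁) (v : H₂) :
    A * (‖adjoint K₁ u‖ ^ 2 + ‖adjoint K₂ v‖ ^ 2) ≤ ‖θ₁ u + θ₂ v‖ ^ 2 := by
  have := hlower (WithLp.toLp 2 (u, v))
  rwa [adjoint_prodOp, prodOp_toLp, WithLp.norm_toLp_prod_sq,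
    integral_norm_inner_toLp_sq hθ₁ hθ₂] at this

end

theorem prod_K_frame_minimal_components_general
    {𝕜 : Type*} [RCLike 𝕜]
    {H₁ : Type*} [NormedAddCommGroup H₁] [InnerProductSpace 𝕜 H₁] [CompleteSpace H₁]
    {H₂ : Type*} [NormedAddCommGroup H₂] [InnerProductSpace 𝕜 H₂] [CompleteSpace H₂]
    {Ω : Type*} [MeasurableSpace Ω] {μ : Measure Ω}
    (K₁ : H₁ →L[𝕜] H₁) (K₂ : H₂ →L[𝕜] H₂)
    (F₁ : Ω → H₁) (F₂ : Ω → H₂)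
    (θ₁ : H₁ →L[𝕜] Lp 𝕜 2 μ)
    (hθ₁ : ∀ u : H₁, (θ₁ u : Ω → 𝕜) =ᵐ[μ] fun ω => (inner 𝕜 (F₁ ω) u : 𝕜))
    (θ₂ : H₂ →L[𝕜] Lp 𝕜 2 μ)
    (hθ₂ : ∀ v : H₂, (θ₂ v : Ω → 𝕜) =ᵐ[μ] fun ω => (inner 𝕜 (F₂ ω) v : 𝕜))
    (hframe : ∃ A B : ℝ, 0 < A ∧ A ≤ B ∧ ∀ x : WithLp 2 (H₁ × H₂),
      A * ‖ContinuousLinearMap.adjoint (prodOp K₁ K₂) x‖ ^ 2 ≤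
        ∫ ω, ‖(inner 𝕜 ((WithLp.equiv 2 (H₁ × H₂)).symm (F₁ ω, F₂ ω)) x : 𝕜)‖ ^ 2 ∂μ ∧
      ∫ ω, ‖(inner 𝕜 ((WithLp.equiv 2 (H₁ × H₂)).symm (F₁ ω, F₂ ω)) x : 𝕜)‖ ^ 2 ∂μ ≤
        B * ‖x‖ ^ 2) :
    (Function.Injective ⇑(ContinuousLinearMap.adjoint θ₁) → K₂ = 0) ∧
    (Function.Injective ⇑(ContinuousLinearMap.adjoint θ₂) → K₁ = 0) ∧
    (Function.Injective ⇑(ContinuousLinearMap.adjoint θ₁) →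
      Function.Injective ⇑(ContinuousLinearMap.adjoint θ₂) → K₁ = 0 ∧ K₂ = 0) := by
  obtain ⟨A, _, hA, _, hf⟩ := hframe
  have hbound := lower_bound_prodOp_toLp hθ₁ hθ₂ (A := A) fun x => (hf x).1
  have hbound₁ (v : H₂) (u : H₁) : A * ‖adjoint K₁ u‖ ^ 2 ≤ ‖θ₂ v + θ₁ u‖ ^ 2 := by
    rw [add_comm]
    exact (mul_le_mul_of_nonneg_left (le_add_of_nonneg_right (sq_nonneg _)) hA.le).trans
      (hbound u v)
  have hbound₂ (u : H₁) (v : H₂) : A * ‖adjoint K₂ v‖ ^ 2 ≤ ‖θ₁ u + θ₂ v‖ ^ 2 :=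
    (mul_le_mul_of_nonneg_left (le_add_of_nonneg_left (sq_nonneg _)) hA.le).trans (hbound u v)
  have hK₁ (h : Function.Injective (adjoint θ₂)) : K₁ = 0 := adjoint.map_eq_zero_iff.mp <|
    (θ₂.denseRange_of_injective_adjoint h).eq_zero_of_mul_norm_sq_le θ₁ _ hA hbound₁
  have hK₂ (h : Function.Injective (adjoint θ₁)) : K₂ = 0 := adjoint.map_eq_zero_iff.mp <|
    (θ₁.denseRange_of_injective_adjoint h).eq_zero_of_mul_norm_sq_le θ₂ _ hA hbound₂
  exact ⟨hK₂, hK₁, fun h₁ h₂ => ⟨hK₁ h₂, hK₂ h₁⟩⟩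

/-- If `F₁, F₂` are Bessel mappings with pre-frame operators `T₁ = θ₁*`, `T₂ = θ₂*`, and
`F₁ ⊕ F₂` is a continuous `(K₁ ⊕ K₂)`-frame, then: (1) if `T₁` is injective (`F₁` is
minimal) then `K₂ = 0`; (2) if `T₂` is injective then `K₁ = 0`; (3) if both are
injective then `K₁ = 0` and `K₂ = 0`. -/
theorem prod_K_frame_minimal_components
    {𝕜 : Type*} [RCLike 𝕜] [MeasurableSpace 𝕜] [BorelSpace 𝕜]
    {H₁ : Type*} [NormedAddCommGroup H₁] [InnerProductSpace 𝕜 H₁] [CompleteSpace H₁]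
    {H₂ : Type*} [NormedAddCommGroup H₂] [InnerProductSpace 𝕜 H₂] [CompleteSpace H₂]
    {Ω : Type*} [MeasurableSpace Ω] {μ : Measure Ω}
    (K₁ : H₁ →L[𝕜] H₁) (K₂ : H₂ →L[𝕜] H₂)
    (F₁ : Ω → H₁) (F₂ : Ω → H₂) (B₁ B₂ : ℝ) (hB₁ : 0 < B₁) (hB₂ : 0 < B₂)
    (hbessel₁ : ∀ u : H₁, Measurable (fun ω => (inner 𝕜 (F₁ ω) u : 𝕜)) ∧
      ∫ ω, ‖(inner 𝕜 (F₁ ω) u : 𝕜)‖ ^ 2 ∂μ ≤ B₁ * ‖u‖ ^ 2)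
    (hbessel₂ : ∀ v : H₂, Measurable (fun ω => (inner 𝕜 (F₂ ω) v : 𝕜)) ∧
      ∫ ω, ‖(inner 𝕜 (F₂ ω) v : 𝕜)‖ ^ 2 ∂μ ≤ B₂ * ‖v‖ ^ 2)
    (θ₁ : H₁ →L[𝕜] Lp 𝕜 2 μ)
    (hθ₁ : ∀ u : H₁, (θ₁ u : Ω → 𝕜) =ᵐ[μ] fun ω => (inner 𝕜 (F₁ ω) u : 𝕜))
    (θ₂ : H₂ →L[𝕜] Lp 𝕜 2 μ)
    (hθ₂ : ∀ v : H₂, (θ₂ v : Ω → 𝕜) =ᵐ[μ] fun ω => (inner 𝕜 (F₂ ω) v : 𝕜))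
    (hframe : ∃ A B : ℝ, 0 < A ∧ A ≤ B ∧ ∀ x : WithLp 2 (H₁ × H₂),
      A * ‖ContinuousLinearMap.adjoint (prodOp K₁ K₂) x‖ ^ 2 ≤
        ∫ ω, ‖(inner 𝕜 ((WithLp.equiv 2 (H₁ × H₂)).symm (F₁ ω, F₂ ω)) x : 𝕜)‖ ^ 2 ∂μ ∧
      ∫ ω, ‖(inner 𝕜 ((WithLp.equiv 2 (H₁ × H₂)).symm (F₁ ω, F₂ ω)) x : 𝕜)‖ ^ 2 ∂μ ≤
        B * ‖x‖ ^ 2) :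
    (Function.Injective ⇑(ContinuousLinearMap.adjoint θ₁) → K₂ = 0) ∧
    (Function.Injective ⇑(ContinuousLinearMap.adjoint θ₂) → K₁ = 0) ∧
    (Function.Injective ⇑(ContinuousLinearMap.adjoint θ₁) →
      Function.Injective ⇑(ContinuousLinearMap.adjoint θ₂) → K₁ = 0 ∧ K₂ = 0) :=
  prod_K_frame_minimal_components_general K₁ K₂ F₁ F₂ θ₁ hθ₁ θ₂ hθ₂ hframe
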